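/- Define g(x) = h(x) − (1−p)·h((x−p)/(1−p)) for p ≤ x ≤ 1 and g(x) = 0 for x > 1, where h is the binary entropy function and p ∈ (0,1). Then the function y ↦ g(y^{1/n}) is non-increasing and convex on [p^n, ∞). -/

import Mathlib

/-- Binary entropy function (base 2). -/
noncomputable def binEnt (x : ℝ) : ℝ :=
  -(x * Real.logb 2 x) - (1 - x) * Real.logb 2 (1 - x)

/-- The function `g` of the paper: `g(x) = h(x) − (1−p)h((x−p)/(1−p))` for `p ≤ x ≤ 1`
and `g(x) = 0` for `x > 1`. -/
noncomputable def gFun (p x : ℝ) : ℝ :=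
  if x ≤ 1 then binEnt x - (1 - p) * binEnt ((x - p)/(1 - p)) else 0

/-!
On `[p, 1]` the unclipped formula for `g` has derivative `log₂ (1 - p / x)`, which is nonpositive
and increasing, so it is antitone and convex there, and it vanishes at `1`. Hence for `y ≥ pⁿ`,
`g (y ^ (1/n)) = g (min (y ^ (1/n)) 1)` is an antitone convex function composed with a monotone
concave function mapping `[pⁿ, ∞)` onto `[p, 1]`.
-/

open Real Set

lemma binEnt_eq_binEntropy_div_log_two (x : ℝ) : binEnt x = binEntropy x / log 2 := by
  simp only [binEnt, logb, binEntropy_eq_negMulLog_add_negMulLog_one_sub, negMulLog]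
  ring

lemma continuous_binEnt : Continuous binEnt := by
  simp only [funext binEnt_eq_binEntropy_div_log_two]
  fun_prop

lemma hasDerivAt_binEnt {x : ℝ} (hx₀ : x ≠ 0) (hx₁ : x ≠ 1) :
    HasDerivAt binEnt (logb 2 (1 - x) - logb 2 x) x := by
  simp only [funext binEnt_eq_binEntropy_div_log_two, logb, ← sub_div]
  exact (hasDerivAt_binEntropy hx₀ hx₁).div_const _

noncomputable def gFormula (p x : ℝ) : ℝ :=
  binEnt x - (1 - p) * binEnt ((x - p) / (1 - p))

lemma gFormula_one {p : ℝ} (hp : p < 1) : gFormula p 1 = 0 := by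
  simp [gFormula, div_self (sub_ne_zero.2 hp.ne'), binEnt]

lemma gFun_eq_gFormula_min {p : ℝ} (hp : p < 1) (x : ℝ) : gFun p x = gFormula p (min x 1) := by
  rcases le_or_gt x 1 with hx | hx
  · rw [min_eq_left hx, gFun, if_pos hx, gFormula]
  · rw [min_eq_right hx.le, gFormula_one hp, gFun, if_neg hx.not_ge]

lemma continuous_gFormula (p : ℝ) : Continuous (gFormula p) := by
  unfold gFormula
  have := continuous_binEnt
  fun_prop

lemma hasDerivAt_gFormula {p x : ℝ} (hp : 0 ≤ p) (hx : x ∈ Ioo p 1) :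
    HasDerivAt (gFormula p) (logb 2 (x - p) - logb 2 x) x := by
  obtain ⟨hpx, hx₁⟩ := hx
  have h1p : 1 - p ≠ 0 := by linarith
  have hu : HasDerivAt (fun y => (y - p) / (1 - p)) (1 / (1 - p)) x := by
    simpa using ((hasDerivAt_id x).sub_const p).div_const (1 - p)
  have hcomp := (hasDerivAt_binEnt (x := (x - p) / (1 - p))
    (div_ne_zero (by linarith) h1p) (by rw [Ne, div_eq_one_iff_eq h1p]; linarith)).comp x hu
  refine ((hasDerivAt_binEnt (by linarith) hx₁.ne).sub (hcomp.const_mul (1 - p))).congr_deriv ?_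
  have hsub : 1 - (x - p) / (1 - p) = (1 - x) / (1 - p) := by field_simp; ring
  rw [hsub, logb_div (by linarith) h1p, logb_div (by linarith) h1p]
  field_simp
  ring

lemma antitoneOn_gFormula {p : ℝ} (hp : 0 ≤ p) : AntitoneOn (gFormula p) (Icc p 1) := by
  refine antitoneOn_of_deriv_nonpos (convex_Icc p 1) (continuous_gFormula p).continuousOn
    (fun x hx => ?_) (fun x hx => ?_) <;> rw [interior_Icc] at hx
  · exact (hasDerivAt_gFormula hp hx).differentiableAt.differentiableWithinAt
  · rw [(hasDerivAt_gFormula hp hx).deriv, sub_nonpos]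
    exact logb_le_logb_of_le one_lt_two (by linarith [hx.1]) (by linarith)

lemma convexOn_gFormula {p : ℝ} (hp : 0 ≤ p) : ConvexOn ℝ (Icc p 1) (gFormula p) := by
  refine MonotoneOn.convexOn_of_deriv (convex_Icc p 1) (continuous_gFormula p).continuousOn
    (fun x hx => ?_) ?_ <;> rw [interior_Icc] at *
  · exact (hasDerivAt_gFormula hp hx).differentiableAt.differentiableWithinAt
  intro a ha b hb hab
  have ha₀ : 0 < a - p := by linarith [ha.1]
  have hb₀ : 0 < b - p := by linarith [hb.1]
  rw [(hasDerivAt_gFormula hp ha).deriv, (hasDerivAt_gFormula hp hb).deriv,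
    ← logb_div ha₀.ne' (by linarith), ← logb_div hb₀.ne' (by linarith)]
  refine logb_le_logb_of_le one_lt_two (div_pos ha₀ (by linarith)) ?_
  rw [div_le_div_iff₀ (by linarith) (by linarith)]
  nlinarith

lemma concaveOn_min_rpow_one {r : ℝ} (hr₀ : 0 ≤ r) (hr₁ : r ≤ 1) :
    ConcaveOn ℝ (Ici 0) (fun y : ℝ => min (y ^ r) 1) :=
  (concaveOn_rpow hr₀ hr₁).inf (concaveOn_const 1 (convex_Ici 0))

lemma monotoneOn_min_rpow_one {r : ℝ} (hr : 0 ≤ r) :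
    MonotoneOn (fun y : ℝ => min (y ^ r) 1) (Ici 0) :=
  fun _ hx _ _ hxy => min_le_min_right 1 (rpow_le_rpow hx hxy hr)

lemma image_min_rpow_one_Ici {r q : ℝ} (hr : 0 < r) (hq₀ : 0 ≤ q) (hq₁ : q ^ r ≤ 1) :
    (fun y : ℝ => min (y ^ r) 1) '' Ici q = Icc (q ^ r) 1 := by
  ext x
  constructor
  · rintro ⟨y, hy, rfl⟩
    exact ⟨le_min (rpow_le_rpow hq₀ hy hr.le) hq₁, min_le_right _ _⟩
  · rintro ⟨hx₀, hx₁⟩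
    have hx : 0 ≤ x := (rpow_nonneg hq₀ r).trans hx₀
    refine ⟨x ^ r⁻¹, ?_, by simp only [rpow_inv_rpow hx hr.ne', min_eq_left hx₁]⟩
    calc q = (q ^ r) ^ r⁻¹ := (rpow_rpow_inv hq₀ hr.ne').symm
      _ ≤ x ^ r⁻¹ := rpow_le_rpow (rpow_nonneg hq₀ r) hx₀ (inv_nonneg.2 hr.le)

/-- Corollary 1: `y ↦ g(y^{1/n})` is non-increasing and convex on `[pⁿ, ∞)`. -/
theorem stmt_13 (p : ℝ) (hp : p ∈ Set.Ioo (0 : ℝ) 1) (n : ℕ) (hn : 1 ≤ n) :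
    AntitoneOn (fun y : ℝ => gFun p (y ^ (1/(n : ℝ)))) (Set.Ici (p ^ n)) ∧
    ConvexOn ℝ (Set.Ici (p ^ n)) (fun y : ℝ => gFun p (y ^ (1/(n : ℝ)))) := by
  obtain ⟨hp₀, hp₁⟩ := hp
  set r : ℝ := 1 / n
  have hr₀ : 0 < r := by positivity
  have hr₁ : r ≤ 1 := div_le_one_of_le₀ (by exact_mod_cast hn) n.cast_nonneg
  have hpr : (p ^ n) ^ r = p := by
    rw [show r = (n : ℝ)⁻¹ from one_div _, pow_rpow_inv_natCast hp₀.le (by omega)]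
  have hsub : Ici (p ^ n) ⊆ Ici 0 := Ici_subset_Ici.2 (by positivity)
  have hmono := (monotoneOn_min_rpow_one hr₀.le).mono hsub
  have hconc := (concaveOn_min_rpow_one hr₀.le hr₁).subset hsub (convex_Ici _)
  have himage := image_min_rpow_one_Ici hr₀ (by positivity) (hpr.trans_le hp₁.le)
  have hanti := antitoneOn_gFormula hp₀.le
  have hconv := convexOn_gFormula hp₀.le
  rw [hpr] at himage
  rw [← himage] at hanti hconv
  have hg : (fun y : ℝ => gFun p (y ^ r)) = gFormula p ∘ fun y => min (y ^ r) 1 :=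
    funext fun y => gFun_eq_gFormula_min hp₁ _
  rw [hg]
  exact ⟨hanti.comp_MonotoneOn hmono (mapsTo_image _ _), hconv.comp_concaveOn hconc hanti⟩
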